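/- arXiv:1205.1170 — 4 statements merged into one kernel-verified Lean document; each statement's English description precedes it below -/
import Mathlib

section
/- In a 1-2 metric space, if u1, u2, u3, u4 are four distinct points with dist(u1,u2) ≠ dist(u3,u4), then the line through u1,u2 is different from the line through u3,u4. -/
def line {α : Type*} [MetricSpace α] (u v : α) : Set α :=
  {p | dist p u + dist u v = dist p v ∨ dist u p + dist p v = dist u v ∨
       dist u v + dist v p = dist u p}

def OneTwo (α : Type*) [MetricSpace α] : Prop :=
  ∀ x y : α, x ≠ y → dist x y = 1 ∨ dist x y = 2

def Twins {α : Type*} [MetricSpace α] (u v : α) : Prop :=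
  dist u v = 2 ∧ ∀ w : α, w ≠ u → w ≠ v → dist u w = dist v w

def linesOf (α : Type*) [MetricSpace α] : Set (Set α) :=
  {L | ∃ u v : α, u ≠ v ∧ L = line u v}

/-! Every point of the line through two points at distance 2, other than those two, is at
distance 1 from both. So if `line a b = line c d` with `dist a b = 1` and `dist c d = 2`,
then `a` and `b` are both at distance 1 from `c`, and then no betweenness relation among
`a`, `b`, `c` can hold, i.e. `c ∉ line a b`. -/

section

variable {α : Type*} [MetricSpace α]

lemma left_mem_line (u v : α) : u ∈ line u v :=
  Or.inl (by simp)

lemma right_mem_line (u v : α) : v ∈ line u v :=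
  Or.inr (Or.inl (by simp))

lemma OneTwo.dist_eq_one_of_mem_line (h12 : OneTwo α) {c d p : α} (hcd : dist c d = 2)
    (hpc : p ≠ c) (hpd : p ≠ d) (hp : p ∈ line c d) : dist p c = 1 ∧ dist p d = 1 := by
  have := dist_comm c p
  have := dist_comm d p
  rcases h12 p c hpc with hc | hc <;> rcases h12 p d hpd with hd | hd <;>
    rcases hp with h | h | h <;> constructor <;> linarith

lemma OneTwo.line_ne_of_dist_eq_one_of_dist_eq_two (h12 : OneTwo α) {a b c d : α}
    (hab : dist a b = 1) (hcd : dist c d = 2)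
    (hac : a ≠ c) (had : a ≠ d) (hbc : b ≠ c) (hbd : b ≠ d) :
    line a b ≠ line c d := by
  intro heq
  have hac1 := (h12.dist_eq_one_of_mem_line hcd hac had (heq ▸ left_mem_line a b)).1
  have hbc1 := (h12.dist_eq_one_of_mem_line hcd hbc hbd (heq ▸ right_mem_line a b)).1
  have hc : c ∈ line a b := heq ▸ left_mem_line c d
  have := dist_comm a c
  have := dist_comm b c
  rcases hc with h | h | h <;> linarith

end

theorem stmt1 {α : Type*} [MetricSpace α] (h12 : OneTwo α)
    (u₁ u₂ u₃ u₄ : α)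
    (h : [u₁, u₂, u₃, u₄].Pairwise (· ≠ ·))
    (hd : dist u₁ u₂ ≠ dist u₃ u₄) :
    line u₁ u₂ ≠ line u₃ u₄ := by
  simp only [List.pairwise_cons, List.mem_cons, List.not_mem_nil,
    forall_eq_or_imp, List.Pairwise.nil] at h
  obtain ⟨⟨h12', h13, h14, -⟩, ⟨h23, h24, -⟩, ⟨h34, -⟩, -⟩ := h
  rcases h12 u₁ u₂ h12' with ha | ha <;> rcases h12 u₃ u₄ h34 with hb | hb
  · exact absurd (ha.trans hb.symm) hd
  · exact h12.line_ne_of_dist_eq_one_of_dist_eq_two ha hb h13 h14 h23 h24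
  · exact (h12.line_ne_of_dist_eq_one_of_dist_eq_two hb ha
      h13.symm h23.symm h14.symm h24.symm).symm
  · exact absurd (ha.trans hb.symm) hd
end

section
/- In a 1-2 metric space, if u1, u2, u3 are three distinct points with dist(u1,u2) = dist(u2,u3) = 1 and u1, u3 are not twins, then the line through u1,u2 differs from the line through u2,u3. -/
/-!
In a 1-2 metric space a point `p ∉ {u, v}` with `dist u v = 1` lies on `line u v` exactly when
`dist p u + dist p v = 3`, i.e. when its distances to `u` and `v` differ. Hence if
`line u₁ u₂ = line u₂ u₃`, every `p ∉ {u₁, u₃}` has `dist p u₁ = dist p u₃` (for `p = u₂` both are `1`),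
and since `u₃` lies on its own line, `dist u₁ u₃ = 2`: so `u₁` and `u₃` would be twins.
-/

section

variable {α : Type*} [MetricSpace α]

namespace OneTwo

lemma mem_line_iff (h12 : OneTwo α) {u v p : α} (huv : dist u v = 1) (hpu : p ≠ u)
    (hpv : p ≠ v) : p ∈ line u v ↔ dist p u + dist p v = 3 := by
  simp only [line, Set.mem_ofPred_eq, dist_comm u p, dist_comm v p, huv]
  rcases h12 p u hpu with a | a <;> rcases h12 p v hpv with b | b <;> rw [a, b] <;> norm_num

lemma dist_eq_of_line_eq (h12 : OneTwo α) {u v w : α} (huv : dist u v = 1)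
    (hvw : dist v w = 1) (heq : line u v = line v w) {p : α} (hpu : p ≠ u) (hpw : p ≠ w) :
    dist p u = dist p w := by
  by_cases hpv : p = v
  · rw [hpv, dist_comm, huv, hvw]
  have key : dist p u + dist p v = 3 ↔ dist p v + dist p w = 3 := by
    rw [← h12.mem_line_iff huv hpu hpv, ← h12.mem_line_iff hvw hpv hpw, heq]
  rcases h12 p u hpu with a | a <;> rcases h12 p v hpv with b | b <;>
    rcases h12 p w hpw with c | c <;> simp only [a, b, c] at key ⊢ <;> norm_num at key

lemma twins_of_line_eq (h12 : OneTwo α) {u v w : α} (huw : u ≠ w) (huv : dist u v = 1)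
    (hvw : dist v w = 1) (heq : line u v = line v w) : Twins u w := by
  have hwv : w ≠ v := fun h => by simp [h] at hvw
  have hw_sum : dist w u + dist w v = 3 := by
    rw [← h12.mem_line_iff huv huw.symm hwv, heq]
    exact right_mem_line v w
  refine ⟨?_, fun p hpu hpw => ?_⟩
  · rw [dist_comm w v, hvw] at hw_sum
    rw [dist_comm]
    linarith
  · rw [dist_comm u p, dist_comm w p]
    exact h12.dist_eq_of_line_eq huv hvw heq hpu hpw

end OneTwo

end

theorem stmt3 {α : Type*} [MetricSpace α] (h12 : OneTwo α)
    (u₁ u₂ u₃ : α) (h : [u₁, u₂, u₃].Pairwise (· ≠ ·))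
    (h1 : dist u₁ u₂ = 1) (h2 : dist u₂ u₃ = 1)
    (ht : ¬ Twins u₁ u₃) :
    line u₁ u₂ ≠ line u₂ u₃ := by
  have h13 : u₁ ≠ u₃ := (List.pairwise_cons.1 h).1 u₃ (by simp)
  exact fun heq => ht (h12.twins_of_line_eq h13 h1 h2 heq)
end

section
/- In a 1-2 metric space, if u and v are twins and x, y are distinct points both different from u and v, then the line through x and y contains either both u and v or neither of them. -/
theorem mem_line_iff_of_dist_eq {α : Type*} [MetricSpace α] {x y p q : α}
    (hx : dist p x = dist q x) (hy : dist p y = dist q y) :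
    p ∈ line x y ↔ q ∈ line x y := by
  have hx' : dist x p = dist x q := by rw [dist_comm, hx, dist_comm]
  have hy' : dist y p = dist y q := by rw [dist_comm, hy, dist_comm]
  simp only [line, Set.mem_ofPred_eq, hx, hy, hx', hy']

theorem stmt4_general {α : Type*} [MetricSpace α]
    (u v x y : α) (htw : Twins u v)
    (hxu : x ≠ u) (hxv : x ≠ v) (hyu : y ≠ u) (hyv : y ≠ v) :
    (u ∈ line x y ↔ v ∈ line x y) :=
  mem_line_iff_of_dist_eq (htw.2 x hxu hxv) (htw.2 y hyu hyv)

theorem stmt4 {α : Type*} [MetricSpace α] (h12 : OneTwo α)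
    (u v x y : α) (htw : Twins u v) (hxy : x ≠ y)
    (hxu : x ≠ u) (hxv : x ≠ v) (hyu : y ≠ u) (hyv : y ≠ v) :
    (u ∈ line x y ↔ v ∈ line x y) :=
  stmt4_general u v x y htw hxu hxv hyu hyv
end

section
/- In a 1-2 metric space, if four distinct points u,v,w,x satisfy dist(u,v)=2, dist(v,w)=1, dist(w,x)=2 and the lines through u,v, through v,w, and through w,x all coincide, then dist(u,w)=dist(u,x)=dist(v,w)=dist(v,x)=1. -/
section

variable {α : Type*} [MetricSpace α]

theorem left_mem_line_s14 (a b : α) : a ∈ line a b :=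
  Or.inl (by rw [dist_self, zero_add])

theorem right_mem_line_s14 (a b : α) : b ∈ line a b :=
  Or.inr (Or.inr (by rw [dist_self, add_zero]))

/-- Off the segment `[a, b]` one distance would have to exceed `2`; on it, `2 = 1 + 1` is the
only split. -/
theorem OneTwo.dist_eq_one_of_mem_line_s14 (h12 : OneTwo α) {a b p : α} (hab : dist a b = 2)
    (hp : p ∈ line a b) (hpa : p ≠ a) (hpb : p ≠ b) :
    dist a p = 1 ∧ dist p b = 1 := by
  have hap := h12 p a hpa
  have hbp := h12 p b hpb
  have hap_comm := dist_comm a p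
  have hbp_comm := dist_comm b p
  rcases hp with hp | hp | hp <;>
    rcases hap with hap | hap <;> rcases hbp with hbp | hbp <;> constructor <;> linarith

end

theorem stmt14 {α : Type*} [MetricSpace α] (h12 : OneTwo α)
    (u v w x : α) (h : [u, v, w, x].Pairwise (· ≠ ·))
    (h1 : dist u v = 2) (h2 : dist v w = 1) (h3 : dist w x = 2)
    (hl : line u v = line v w ∧ line v w = line w x) :
    dist u w = 1 ∧ dist u x = 1 ∧ dist v w = 1 ∧ dist v x = 1 := by
  simp only [List.pairwise_cons, List.mem_cons, List.not_mem_nil, or_false, forall_eq_or_imp,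
    forall_eq, IsEmpty.forall_iff, implies_true, List.Pairwise.nil, and_true] at h
  obtain ⟨⟨-, huw, hux⟩, ⟨-, hvx⟩, -⟩ := h
  have hu_mem : u ∈ line w x := by rw [← hl.2, ← hl.1]; exact left_mem_line_s14 u v
  have hx_mem : x ∈ line u v := by rw [hl.1, hl.2]; exact right_mem_line_s14 w x
  obtain ⟨hwu, hux'⟩ := h12.dist_eq_one_of_mem_line_s14 h3 hu_mem huw hux
  obtain ⟨-, hxv⟩ := h12.dist_eq_one_of_mem_line_s14 h1 hx_mem hux.symm hvx.symm
  exact ⟨dist_comm u w ▸ hwu, hux', h2, dist_comm v x ▸ hxv⟩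
end
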